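/- arXiv:1909.13288 — 2 statements merged into one kernel-verified Lean document; each statement's English description precedes it below -/
import Mathlib

section
/- Let α > 0 and suppose η* ∈ ℝ satisfies B(η*, α) = 0, i.e. 3 e^{-η*} / A_0(η*) = 3 − 2η* + 4(η*)²/α. Then B_η(η*, α) = −(8η*/(3α²)) · ((η*)² + η*α/2 + (α/2)(15/2 − α)). -/
open Real MeasureTheory Set Filter

/-- `A k η = ∫_0^1 z^k e^{-η z²} dz`. -/
noncomputable def A (k : ℕ) (η : ℝ) : ℝ :=
  ∫ z in (0:ℝ)..1, z ^ k * Real.exp (-η * z ^ 2)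

/-- `B(η, α) = 3 e^{-η} / A₀(η) − (3 − 2η + 4η²/α)`. -/
noncomputable def B (η α : ℝ) : ℝ :=
  3 * Real.exp (-η) / A 0 η - (3 - 2 * η + 4 * η ^ 2 / α)

/-!
Differentiating under the integral sign gives `A₀' = -A₂`, and integrating
`(z e^{-ηz²})' = e^{-ηz²} - 2ηz² e^{-ηz²}` over `[0, 1]` gives `A₀ - 2ηA₂ = e^{-η}`.
At a zero of `B` we have `3e^{-η}/A₀ = 3 - 2η + 4η²/α`, so for `η ≠ 0` both ratios
`e^{-η}/A₀` and `A₂/A₀` occurring in `B_η` are rational in `η` and `α`; the case `η = 0`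
follows from `A₀(0) = 1`, `A₂(0) = 1/3`.
-/

lemma continuous_A_integrand (k : ℕ) (η : ℝ) :
    Continuous fun z : ℝ => z ^ k * exp (-η * z ^ 2) := by
  fun_prop

lemma A_zero_pos (η : ℝ) : 0 < A 0 η :=
  intervalIntegral.intervalIntegral_pos_of_pos
    ((continuous_A_integrand 0 η).intervalIntegrable 0 1) (fun _ => by positivity) zero_lt_one

lemma A_at_zero (k : ℕ) : A k 0 = 1 / (k + 1) := by
  simp [A, integral_pow]

lemma succ_mul_A_sub_two_mul_A_add_two (k : ℕ) (η : ℝ) :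
    (k + 1) * A k η - 2 * η * A (k + 2) η = exp (-η) := by
  have hderiv : ∀ z ∈ uIcc (0:ℝ) 1, HasDerivAt (fun z : ℝ => z ^ (k + 1) * exp (-η * z ^ 2))
      ((k + 1) * (z ^ k * exp (-η * z ^ 2)) - 2 * η * (z ^ (k + 2) * exp (-η * z ^ 2))) z := by
    intro z _
    have hexp : HasDerivAt (fun z : ℝ => exp (-η * z ^ 2))
        (exp (-η * z ^ 2) * (-η * (2 * z))) z := by
      simpa using ((hasDerivAt_pow 2 z).const_mul (-η)).exp
    refine ((hasDerivAt_pow (k + 1) z).mul hexp).congr_deriv ?_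
    rw [Nat.add_sub_cancel]
    push_cast; ring
  have hint (j : ℕ) (c : ℝ) :
      IntervalIntegrable (fun z : ℝ => c * (z ^ j * exp (-η * z ^ 2))) volume 0 1 :=
    (continuous_const.mul (continuous_A_integrand j η)).intervalIntegrable 0 1
  have := intervalIntegral.integral_eq_sub_of_hasDerivAt hderiv ((hint k _).sub (hint (k + 2) _))
  rw [intervalIntegral.integral_sub (hint k _) (hint (k + 2) _),
    intervalIntegral.integral_const_mul, intervalIntegral.integral_const_mul] at this
  simpa [A] using this

lemma hasDerivAt_A (k : ℕ) (η : ℝ) : HasDerivAt (A k) (-A (k + 2) η) η := by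
  have key := intervalIntegral.hasDerivAt_integral_of_dominated_loc_of_deriv_le
    (F := fun x t => t ^ k * exp (-x * t ^ 2))
    (F' := fun x t => -(t ^ (k + 2) * exp (-x * t ^ 2)))
    (bound := fun _ => exp (|η| + 1)) (μ := volume) (a := 0) (b := 1)
    (Metric.ball_mem_nhds η one_pos)
    (Eventually.of_forall fun x => (continuous_A_integrand k x).aestronglyMeasurable)
    ((continuous_A_integrand k η).intervalIntegrable 0 1)
    (continuous_A_integrand (k + 2) η).neg.aestronglyMeasurable ?_ intervalIntegrable_const ?_
  · rw [intervalIntegral.integral_neg] at key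
    exact key.2
  · refine ae_of_all _ fun t ht x hx => ?_
    rw [uIoc_of_le zero_le_one] at ht
    have ht2 : t ^ 2 ≤ 1 := pow_le_one₀ ht.1.le ht.2
    have hx : |x| ≤ |η| + 1 := by
      have := abs_sub_abs_le_abs_sub x η
      rw [Metric.mem_ball, dist_eq] at hx
      linarith
    have hexp : exp (-x * t ^ 2) ≤ exp (|η| + 1) := by
      refine exp_le_exp.mpr ?_
      nlinarith [neg_le_abs x, abs_nonneg x, sq_nonneg t]
    rw [norm_neg, norm_of_nonneg (by have := ht.1; positivity)]
    calc t ^ (k + 2) * exp (-x * t ^ 2) ≤ 1 * exp (|η| + 1) :=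
          mul_le_mul (pow_le_one₀ ht.1.le ht.2) hexp (by positivity) zero_le_one
      _ = exp (|η| + 1) := one_mul _
  · refine ae_of_all _ fun t _ x _ => ?_
    refine ((((hasDerivAt_neg x).mul_const (t ^ 2)).exp).const_mul (t ^ k)).congr_deriv ?_
    ring

lemma hasDerivAt_B (η α : ℝ) : HasDerivAt (fun η => B η α)
    (-(3 * exp (-η)) / A 0 η + 3 * exp (-η) * A 2 η / A 0 η ^ 2 + 2 - 8 * η / α) η := by
  have hexp : HasDerivAt (fun η => 3 * exp (-η)) (-(3 * exp (-η))) η := by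
    simpa using ((hasDerivAt_neg η).exp.const_mul 3)
  have hpoly : HasDerivAt (fun η : ℝ => 3 - 2 * η + 4 * η ^ 2 / α) (-2 + 8 * η / α) η := by
    refine ((((hasDerivAt_id η).const_mul 2).const_sub 3).add
      (((hasDerivAt_pow 2 η).const_mul 4).div_const α)).congr_deriv ?_
    norm_num; ring
  refine ((hexp.div (hasDerivAt_A 0 η) (A_zero_pos η).ne').sub hpoly).congr_deriv ?_
  field_simp
  ring

/-- If `α > 0` and `B(η*, α) = 0`, then
`B_η(η*, α) = −(8η*/(3α²))((η*)² + η*α/2 + (α/2)(15/2 − α))`. -/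
theorem stmt_11 (α : ℝ) (hα : 0 < α) (ηs : ℝ) (hzero : B ηs α = 0) :
    deriv (fun η : ℝ => B η α) ηs =
      -(8 * ηs / (3 * α ^ 2)) * (ηs ^ 2 + ηs * α / 2 + α / 2 * (15 / 2 - α)) := by
  rw [(hasDerivAt_B ηs α).deriv]
  rcases eq_or_ne ηs 0 with rfl | hη
  · rw [A_at_zero, A_at_zero]
    norm_num
  have ha := (A_zero_pos ηs).ne'
  have hexp : exp (-ηs) = (3 - 2 * ηs + 4 * ηs ^ 2 / α) * A 0 ηs / 3 := by
    rw [B, sub_eq_zero, div_eq_iff ha] at hzero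
    linarith
  have hA2 : A 2 ηs = (A 0 ηs - exp (-ηs)) / (2 * ηs) := by
    have := succ_mul_A_sub_two_mul_A_add_two 0 ηs
    field_simp
    push_cast at this
    linarith
  rw [hA2, hexp]
  field_simp [hα.ne']
  ring
end

section
/- For every η ∈ ℝ and α > 0, B(η, α) = 0 if and only if η = 0 or α (A_2(η) − A_4(η)) = A_0(η). Equivalently, the equation 3 e^{-η}/A_0(η) = 3 − 2η + 4η²/α is equivalent to 4η² ((A_2(η) − A_4(η))/A_0(η) − 1/α) = 0. -/
open Real MeasureTheory Set Filter

/-!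
Integrating `d/dz (z^{k+1} e^{-η z²}) = ((k+1) z^k - 2η z^{k+2}) e^{-η z²}` over `[0, 1]` gives
`(k+1) A_k - 2η A_{k+2} = e^{-η}`. Combining the cases `k = 0` and `k = 2` yields
`3 e^{-η} = (3 - 2η) A_0 + 4η² (A_2 - A_4)`, so after clearing the positive denominator `A_0`
the equation `3 e^{-η} / A_0 = 3 - 2η + 4η²/α` reduces to `4η² (α (A_2 - A_4) - A_0) = 0`.
-/

lemma continuous_pow_mul_exp (k : ℕ) (η : ℝ) :
    Continuous fun z : ℝ => z ^ k * Real.exp (-η * z ^ 2) := by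
  fun_prop

lemma A_pos (k : ℕ) (η : ℝ) : 0 < A k η :=
  intervalIntegral.intervalIntegral_pos_of_pos_on
    ((continuous_pow_mul_exp k η).intervalIntegrable 0 1)
    (fun _ hz => mul_pos (pow_pos hz.1 k) (Real.exp_pos _)) zero_lt_one

lemma hasDerivAt_pow_succ_mul_exp (k : ℕ) (η x : ℝ) :
    HasDerivAt (fun z : ℝ => z ^ (k + 1) * Real.exp (-η * z ^ 2))
      ((k + 1) * (x ^ k * Real.exp (-η * x ^ 2)) - 2 * η * (x ^ (k + 2) * Real.exp (-η * x ^ 2)))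
      x := by
  have hexp : HasDerivAt (fun z : ℝ => Real.exp (-η * z ^ 2))
      (Real.exp (-η * x ^ 2) * (-η * (2 * x))) x := by
    simpa using ((hasDerivAt_pow 2 x).const_mul (-η)).exp
  refine ((hasDerivAt_pow (k + 1) x).mul hexp).congr_deriv ?_
  rw [Nat.add_sub_cancel]
  push_cast
  ring

lemma succ_mul_A_sub_mul_A_add_two (k : ℕ) (η : ℝ) :
    (k + 1) * A k η - 2 * η * A (k + 2) η = Real.exp (-η) := by
  have hk := (continuous_pow_mul_exp k η).intervalIntegrable (μ := volume) 0 1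
  have hk2 := (continuous_pow_mul_exp (k + 2) η).intervalIntegrable (μ := volume) 0 1
  have hftc := intervalIntegral.integral_eq_sub_of_hasDerivAt
    (fun x _ => hasDerivAt_pow_succ_mul_exp k η x) ((hk.const_mul _).sub (hk2.const_mul _))
  rw [intervalIntegral.integral_sub (hk.const_mul _) (hk2.const_mul _),
    intervalIntegral.integral_const_mul, intervalIntegral.integral_const_mul] at hftc
  simpa [A] using hftc

lemma three_mul_exp_neg_eq (η : ℝ) :
    3 * Real.exp (-η) = (3 - 2 * η) * A 0 η + 4 * η ^ 2 * (A 2 η - A 4 η) := by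
  have h0 := succ_mul_A_sub_mul_A_add_two 0 η
  have h2 := succ_mul_A_sub_mul_A_add_two 2 η
  push_cast at h0 h2
  linear_combination (2 * η - 3) * h0 - 2 * η * h2

lemma three_mul_exp_neg_div_A_eq_iff {η α : ℝ} (hα : α ≠ 0) :
    3 * Real.exp (-η) / A 0 η = 3 - 2 * η + 4 * η ^ 2 / α ↔
      η = 0 ∨ α * (A 2 η - A 4 η) = A 0 η := by
  rw [div_eq_iff (A_pos 0 η).ne', three_mul_exp_neg_eq]
  calc _ ↔ 4 * η ^ 2 * (α * (A 2 η - A 4 η) - A 0 η) = 0 := by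
        constructor <;> intro h <;> field_simp at h ⊢ <;> linear_combination h
    _ ↔ _ := by simp [sub_eq_zero]

/-- For `η ∈ ℝ` and `α > 0`, `B(η, α) = 0` iff `η = 0` or
`α (A₂(η) − A₄(η)) = A₀(η)`; equivalently, the equation
`3 e^{-η}/A₀(η) = 3 − 2η + 4η²/α` is equivalent to
`4η²((A₂(η) − A₄(η))/A₀(η) − 1/α) = 0`. -/
theorem stmt_15 (η α : ℝ) (hα : 0 < α) :
    (B η α = 0 ↔ η = 0 ∨ α * (A 2 η - A 4 η) = A 0 η) ∧
    (3 * Real.exp (-η) / A 0 η = 3 - 2 * η + 4 * η ^ 2 / α ↔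
      4 * η ^ 2 * ((A 2 η - A 4 η) / A 0 η - 1 / α) = 0) := by
  have hiff := three_mul_exp_neg_div_A_eq_iff (η := η) hα.ne'
  refine ⟨by rw [B, sub_eq_zero, hiff], ?_⟩
  rw [hiff, mul_eq_zero, sub_eq_zero, div_eq_div_iff (A_pos 0 η).ne' hα.ne', mul_comm α]
  simp
end
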